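/- arXiv:2503.19454 — 3 statements merged into one kernel-verified Lean document; each statement's English description precedes it below -/
import Mathlib

section
/- The small space s_{k,Φ,w} is the largest linear subspace contained in the class c_{k,Φ,w}: s_{k,Φ,w} ⊆ c_{k,Φ,w}, and if S is any vector subspace of the space of complex sequences with S ⊆ c_{k,Φ,w}, then S ⊆ s_{k,Φ,w}. -/
open Filter Topology

def IsOrlicz (Φ : ℝ → ℝ) : Prop :=
  ContinuousOn Φ (Set.Ici 0) ∧ MonotoneOn Φ (Set.Ici 0) ∧
    ConvexOn ℝ (Set.Ici 0) Φ ∧ Φ 0 = 0 ∧ (∀ t > 0, 0 < Φ t) ∧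
    Tendsto Φ atTop atTop

noncomputable def mu (k : ℝ) (Φ : ℝ → ℝ) (w : ℤ → ℝ) (m : ℤ) : ℝ :=
  w m * (1 + Φ |(m : ℝ)|) ^ k

def MemC (k : ℝ) (Φ : ℝ → ℝ) (w : ℤ → ℝ) (p : ℤ → ℂ) : Prop :=
  Summable fun m : ℤ => mu k Φ w m * Φ (‖p m‖)

def MemS (k : ℝ) (Φ : ℝ → ℝ) (w : ℤ → ℝ) (p : ℤ → ℂ) : Prop :=
  ∀ ρ > (0 : ℝ), Summable fun m : ℤ => mu k Φ w m * Φ (‖p m‖ / ρ)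

def normSet (k : ℝ) (Φ : ℝ → ℝ) (w : ℤ → ℝ) (p : ℤ → ℂ) : Set ℝ :=
  {ρ : ℝ | 0 < ρ ∧ (Summable fun m : ℤ => mu k Φ w m * Φ (‖p m‖ / ρ)) ∧
    ∑' m : ℤ, mu k Φ w m * Φ (‖p m‖ / ρ) ≤ 1}

noncomputable def luxNorm (k : ℝ) (Φ : ℝ → ℝ) (w : ℤ → ℝ) (p : ℤ → ℂ) : ℝ :=
  sInf (normSet k Φ w p)

def MemL (k : ℝ) (Φ : ℝ → ℝ) (w : ℤ → ℝ) (p : ℤ → ℂ) : Prop :=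
  (normSet k Φ w p).Nonempty

def Delta2 (Φ : ℝ → ℝ) : Prop :=
  ∃ C : ℝ, ∀ᶠ t in 𝓝[>] (0 : ℝ), Φ (2 * t) / Φ t ≤ C

theorem MemS.memC {k : ℝ} {Φ : ℝ → ℝ} {w : ℤ → ℝ} {p : ℤ → ℂ} (hp : MemS k Φ w p) :
    MemC k Φ w p := by
  simpa [MemC] using hp 1 one_pos

theorem memS_of_forall_memC_smul {k : ℝ} {Φ : ℝ → ℝ} {w : ℤ → ℝ} {p : ℤ → ℂ}
    (h : ∀ c : ℂ, MemC k Φ w (c • p)) : MemS k Φ w p := by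
  intro ρ hρ
  simpa [MemC, div_eq_inv_mul, abs_of_pos hρ] using h (ρ : ℂ)⁻¹

theorem stmt9_general (Φ : ℝ → ℝ) (w : ℤ → ℝ) (k : ℝ) :
    (∀ p : ℤ → ℂ, MemS k Φ w p → MemC k Φ w p) ∧
      (∀ S : Submodule ℂ (ℤ → ℂ), (S : Set (ℤ → ℂ)) ⊆ {p | MemC k Φ w p} →
        (S : Set (ℤ → ℂ)) ⊆ {p | MemS k Φ w p}) :=
  ⟨fun _ hp => hp.memC, fun S hS _ hp =>
    memS_of_forall_memC_smul fun c => hS (S.smul_mem c hp)⟩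

theorem stmt9 (Φ : ℝ → ℝ) (hΦ : IsOrlicz Φ) (w : ℤ → ℝ) (hw : ∀ m, 0 < w m) (k : ℝ) :
    (∀ p : ℤ → ℂ, MemS k Φ w p → MemC k Φ w p) ∧
      (∀ S : Submodule ℂ (ℤ → ℂ), (S : Set (ℤ → ℂ)) ⊆ {p | MemC k Φ w p} →
        (S : Set (ℤ → ℂ)) ⊆ {p | MemS k Φ w p}) :=
  stmt9_general Φ w k
end

section
/- The small Orlicz-Sobolev sequence space s_{k,Φ,w} is separable with respect to the Luxemburg norm ‖·‖_{k,Φ,w}. -/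
open Filter Topology

/-! Finitely supported sequences with entries in `ℚ + ℚi` form a countable set contained in
`s_{k,Φ,w}`. Given `p ∈ s_{k,Φ,w}` and `ε > 0`, choose a finite set `F` outside which the modular
`∑ μ_m Φ(|p_m| / ε)` is at most `1/2`, and truncate `p` to `F` with entries rounded to Gaussian
rationals. Off `F` the difference is `p` itself; on `F` it is so small that, `Φ` being continuous
at `0` with `Φ 0 = 0`, its finitely many terms contribute at most `1/2`. So `ε` belongs to the
Luxemburg set of the difference. -/

theorem luxNorm_le_of_tsum_le {k : ℝ} {Φ : ℝ → ℝ} {w : ℤ → ℝ} {p : ℤ → ℂ} {ρ : ℝ} (hρ : 0 < ρ)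
    (hsum : Summable fun m => mu k Φ w m * Φ (‖p m‖ / ρ))
    (hle : ∑' m, mu k Φ w m * Φ (‖p m‖ / ρ) ≤ 1) : luxNorm k Φ w p ≤ ρ :=
  csInf_le ⟨0, fun _ hx => hx.1.le⟩ ⟨hρ, hsum, hle⟩

theorem memS_of_eq_zero_off_finset {k : ℝ} {Φ : ℝ → ℝ} {w : ℤ → ℝ} {p : ℤ → ℂ} (h0 : Φ 0 = 0)
    (F : Finset ℤ) (hp : ∀ m ∉ F, p m = 0) : MemS k Φ w p := fun _ _ =>
  summable_of_ne_finset_zero (s := F) fun m hm => by simp [hp m hm, h0]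

theorem summable_and_tsum_le_of_eq_off_finset {ι : Type*} {a b : ι → ℝ} {F : Finset ι}
    (ha : Summable a) (hab : ∀ m ∉ F, b m = a m) {c d : ℝ} (hF : ∑ m ∈ F, b m ≤ c)
    (htail : ∑' m : ↥((F : Set ι)ᶜ), a m ≤ d) : Summable b ∧ ∑' m, b m ≤ c + d := by
  have hb : Summable b :=
    ha.congr_cofinite (F.finite_toSet.subset fun m hm => by_contra fun h => hm (hab m h).symm)
  refine ⟨hb, ?_⟩
  have htail_eq : ∑' m : ↥((F : Set ι)ᶜ), b m = ∑' m : ↥((F : Set ι)ᶜ), a m :=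
    tsum_congr fun m => hab m m.2
  rw [← hb.sum_add_tsum_compl, htail_eq]
  exact add_le_add hF htail

theorem exists_pos_forall_sum_mul_le {ι : Type*} {Φ : ℝ → ℝ}
    (hΦ : ContinuousWithinAt Φ (Set.Ici 0) 0) (h0 : Φ 0 = 0) (μ : ι → ℝ) (F : Finset ι)
    {c : ℝ} (hc : 0 < c) :
    ∃ δ > 0, ∀ t : ι → ℝ, (∀ m ∈ F, 0 ≤ t m ∧ t m < δ) → ∑ m ∈ F, μ m * Φ (t m) ≤ c := by
  set S := ∑ m ∈ F, |μ m|
  obtain ⟨δ, hδ, hΦδ⟩ := Metric.continuousWithinAt_iff.mp hΦ (c / (S + 1)) (by positivity)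
  have hΦsmall : ∀ s, 0 ≤ s → s < δ → |Φ s| < c / (S + 1) := fun s hs hsδ => by
    simpa [h0, Real.dist_eq, abs_of_nonneg hs] using
      hΦδ (Set.mem_Ici.mpr hs) (by rwa [Real.dist_eq, sub_zero, abs_of_nonneg hs])
  refine ⟨δ, hδ, fun t ht => ?_⟩
  have hterm : ∀ m ∈ F, μ m * Φ (t m) ≤ |μ m| * (c / (S + 1)) := fun m hm => by
    have hsmall := hΦsmall (t m) (ht m hm).1 (ht m hm).2
    calc μ m * Φ (t m) ≤ |μ m| * |Φ (t m)| := by rw [← abs_mul]; exact le_abs_self _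
      _ ≤ |μ m| * (c / (S + 1)) := by gcongr
  calc ∑ m ∈ F, μ m * Φ (t m) ≤ ∑ m ∈ F, |μ m| * (c / (S + 1)) := F.sum_le_sum hterm
    _ = c * (S / (S + 1)) := by rw [← Finset.sum_mul]; ring
    _ ≤ c * 1 := by gcongr; exact (div_le_one (by positivity)).mpr (by linarith)
    _ = c := mul_one c

def ofRatPair (r : ℚ × ℚ) : ℂ := (r.1 : ℂ) + (r.2 : ℂ) * Complex.I

theorem exists_ofRatPair_near (z : ℂ) {ε : ℝ} (hε : 0 < ε) : ∃ r, ‖z - ofRatPair r‖ < ε := by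
  obtain ⟨a, ha⟩ := exists_rat_near z.re (half_pos hε)
  obtain ⟨b, hb⟩ := exists_rat_near z.im (half_pos hε)
  refine ⟨(a, b), ?_⟩
  calc ‖z - ofRatPair (a, b)‖
      ≤ |(z - ofRatPair (a, b)).re| + |(z - ofRatPair (a, b)).im| :=
        Complex.norm_le_abs_re_add_abs_im _
    _ = |z.re - a| + |z.im - b| := by simp [ofRatPair]
    _ < ε / 2 + ε / 2 := add_lt_add ha hb
    _ = ε := add_halves ε

def gaussRatSeq {ι : Type*} (f : ι →₀ ℚ × ℚ) (m : ι) : ℂ := ofRatPair (f m)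

theorem gaussRatSeq_eq_zero_of_notMem_support {ι : Type*} {f : ι →₀ ℚ × ℚ} {m : ι}
    (hm : m ∉ f.support) : gaussRatSeq f m = 0 := by
  simp [gaussRatSeq, ofRatPair, Finsupp.notMem_support_iff.mp hm]

theorem exists_gaussRatSeq_near {ι : Type*} (p : ι → ℂ) (F : Finset ι) {ε : ℝ} (hε : 0 < ε) :
    ∃ f : ι →₀ ℚ × ℚ, (∀ m ∈ F, ‖p m - gaussRatSeq f m‖ < ε) ∧ ∀ m ∉ F, gaussRatSeq f m = 0 := by
  classical
  choose r hr using fun m => exists_ofRatPair_near (p m) hε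
  refine ⟨Finsupp.indicator F fun m _ => r m, fun m hm => ?_, fun m hm => ?_⟩
  · simpa [gaussRatSeq, Finsupp.indicator_apply, hm] using hr m
  · simp [gaussRatSeq, ofRatPair, Finsupp.indicator_apply, hm]

theorem stmt11_general (Φ : ℝ → ℝ) (hΦ : IsOrlicz Φ) (w : ℤ → ℝ) (k : ℝ) :
    ∃ D : Set (ℤ → ℂ), D.Countable ∧ D ⊆ {p | MemS k Φ w p} ∧
      ∀ p : ℤ → ℂ, MemS k Φ w p → ∀ ε > (0 : ℝ), ∃ q ∈ D, luxNorm k Φ w (p - q) ≤ ε := by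
  obtain ⟨hcont, -, -, h0, -, -⟩ := hΦ
  refine ⟨Set.range gaussRatSeq, Set.countable_range _, ?_, fun p hp ε hε => ?_⟩
  · rintro _ ⟨f, rfl⟩
    exact memS_of_eq_zero_off_finset h0 f.support fun m => gaussRatSeq_eq_zero_of_notMem_support
  obtain ⟨F, htail⟩ := ((tendsto_tsum_compl_atTop_zero fun m => mu k Φ w m * Φ (‖p m‖ / ε)
    ).eventually (eventually_le_nhds one_half_pos)).exists
  obtain ⟨δ, hδ, hsmall⟩ :=
    exists_pos_forall_sum_mul_le (hcont 0 Set.self_mem_Ici) h0 (mu k Φ w) F one_half_pos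
  obtain ⟨f, hnear, hoff⟩ := exists_gaussRatSeq_near p F (mul_pos hε hδ)
  have hF : ∑ m ∈ F, mu k Φ w m * Φ (‖(p - gaussRatSeq f) m‖ / ε) ≤ 1 / 2 :=
    hsmall _ fun m hm =>
      ⟨by positivity, (div_lt_iff₀ hε).mpr (by simpa [mul_comm] using hnear m hm)⟩
  obtain ⟨hsum, hle⟩ := summable_and_tsum_le_of_eq_off_finset (hp ε hε)
    (fun m hm => by simp [hoff m hm]) hF htail
  exact ⟨gaussRatSeq f, ⟨f, rfl⟩, luxNorm_le_of_tsum_le hε hsum (by linarith)⟩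

theorem stmt11 (Φ : ℝ → ℝ) (hΦ : IsOrlicz Φ) (w : ℤ → ℝ) (hw : ∀ m, 0 < w m) (k : ℝ) :
    ∃ D : Set (ℤ → ℂ), D.Countable ∧ D ⊆ {p | MemS k Φ w p} ∧
      ∀ p : ℤ → ℂ, MemS k Φ w p → ∀ ε > (0 : ℝ), ∃ q ∈ D, luxNorm k Φ w (p - q) ≤ ε :=
  stmt11_general Φ hΦ w k
end

section
/- Let Φ be an Orlicz function satisfying the Δ₂-condition at zero, let k' > k ≥ 0 and suppose inf_{m∈ℤ} w_m > 0. Then the embedding s_{k',Φ,w} ↪ s_{k,Φ,w} is compact: every bounded subset of s_{k',Φ,w} has compact closure in s_{k,Φ,w}. -/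
/-!
A bound on the `k'`-norm bounds the `k'`-modular at a fixed scale, hence every coordinate
uniformly, because the weights are at least `inf w > 0`. A subsequence therefore converges
coordinatewise, and by Fatou the limit `p` has finite modular. The differences `u (φ n) - p` have
bounded `k'`-modular by convexity; since `μ_k / μ_k' = (1 + Φ |m|) ^ (k - k') → 0`, the tails of
their `k`-modular are uniformly small, while the finitely many remaining coordinates tend to `0`.
Changing the scale of a modular costs only a constant, by `Δ₂` at `0` and the uniform bound on
the coordinates.
-/

open Filter Topology

namespace IsOrlicz

variable {Φ : ℝ → ℝ} (hΦ : IsOrlicz Φ)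
include hΦ

theorem map_zero : Φ 0 = 0 := hΦ.2.2.2.1

theorem pos {t : ℝ} (ht : 0 < t) : 0 < Φ t := hΦ.2.2.2.2.1 t ht

theorem tendsto_atTop : Tendsto Φ atTop atTop := hΦ.2.2.2.2.2

theorem nonneg {t : ℝ} (ht : 0 ≤ t) : 0 ≤ Φ t := by
  rcases ht.eq_or_lt with rfl | ht
  · exact hΦ.map_zero.ge
  · exact (hΦ.pos ht).le

theorem mono {s t : ℝ} (hs : 0 ≤ s) (hst : s ≤ t) : Φ s ≤ Φ t :=
  hΦ.2.1 hs (hs.trans hst) hst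

theorem map_mul_le {θ t : ℝ} (ht : 0 ≤ t) (hθ₀ : 0 ≤ θ) (hθ₁ : θ ≤ 1) :
    Φ (θ * t) ≤ θ * Φ t := by
  have h := hΦ.2.2.1.2 (Set.mem_Ici.2 ht) (Set.mem_Ici.2 le_rfl) hθ₀ (sub_nonneg.2 hθ₁)
    (by ring)
  simpa only [smul_eq_mul, mul_zero, add_zero, hΦ.map_zero] using h

theorem map_add_div_two_le {s t : ℝ} (hs : 0 ≤ s) (ht : 0 ≤ t) :
    Φ ((s + t) / 2) ≤ (Φ s + Φ t) / 2 := by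
  have h := hΦ.2.2.1.2 (Set.mem_Ici.2 hs) (Set.mem_Ici.2 ht) (by norm_num : (0 : ℝ) ≤ 1 / 2)
    (by norm_num : (0 : ℝ) ≤ 1 / 2) (by norm_num)
  simp only [smul_eq_mul] at h
  rw [show (s + t) / 2 = 1 / 2 * s + 1 / 2 * t by ring]
  linarith

theorem tendsto_comp {ι : Type*} {l : Filter ι} {f : ι → ℝ} {x : ℝ} (hx : 0 ≤ x)
    (hf : Tendsto f l (𝓝 x)) (hf₀ : ∀ i, 0 ≤ f i) :
    Tendsto (fun i => Φ (f i)) l (𝓝 (Φ x)) :=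
  (hΦ.1 x hx).tendsto.comp (tendsto_nhdsWithin_iff.2 ⟨hf, Eventually.of_forall hf₀⟩)

end IsOrlicz

namespace Delta2

variable {Φ : ℝ → ℝ} (hΦ : IsOrlicz Φ) (hΔ : Delta2 Φ)
include hΦ hΔ

/-- Away from `0` the doubling bound follows from monotonicity and positivity of `Φ`. -/
theorem exists_map_two_mul_le (T : ℝ) :
    ∃ C, 0 ≤ C ∧ ∀ t, 0 ≤ t → t ≤ T → Φ (2 * t) ≤ C * Φ t := by
  obtain ⟨C₀, hC₀⟩ := hΔ
  obtain ⟨δ, hδ, hδC₀⟩ := mem_nhdsGT_iff_exists_Ioo_subset.1 hC₀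
  have hΦδ : 0 < Φ δ := hΦ.pos hδ
  refine ⟨max (max C₀ 0) (Φ (2 * T) / Φ δ), le_max_of_le_left (le_max_right _ _), ?_⟩
  intro t ht htT
  rcases ht.eq_or_lt with rfl | ht₀
  · simp [hΦ.map_zero]
  rcases lt_or_ge t δ with htδ | hδt
  · have hΦt : 0 < Φ t := hΦ.pos ht₀
    have hratio : Φ (2 * t) / Φ t ≤ C₀ := hδC₀ ⟨ht₀, htδ⟩
    calc Φ (2 * t) ≤ C₀ * Φ t := (div_le_iff₀ hΦt).1 hratio
      _ ≤ _ := by gcongr; exact (le_max_left _ _).trans (le_max_left _ _)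
  · calc Φ (2 * t) ≤ Φ (2 * T) := hΦ.mono (by linarith) (by linarith)
      _ = Φ (2 * T) / Φ δ * Φ δ := by field_simp
      _ ≤ Φ (2 * T) / Φ δ * Φ t := by
          gcongr
          · exact div_nonneg (hΦ.nonneg (by linarith)) hΦδ.le
          · exact hΦ.mono hδ.le hδt
      _ ≤ _ := by gcongr; exacts [hΦ.nonneg ht, le_max_right _ _]

theorem exists_map_two_pow_mul_le (N : ℕ) (T : ℝ) :
    ∃ G, 0 ≤ G ∧ ∀ t, 0 ≤ t → t ≤ T → Φ (2 ^ N * t) ≤ G * Φ t := by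
  induction N generalizing T with
  | zero => exact ⟨1, zero_le_one, fun t _ _ => by simp⟩
  | succ N ih =>
    obtain ⟨C, hC, hCT⟩ := exists_map_two_mul_le hΦ hΔ T
    obtain ⟨G, hG, hGT⟩ := ih (2 * T)
    refine ⟨G * C, mul_nonneg hG hC, fun t ht htT => ?_⟩
    calc Φ (2 ^ (N + 1) * t) = Φ (2 ^ N * (2 * t)) := by ring_nf
      _ ≤ G * Φ (2 * t) := hGT _ (by linarith) (by linarith)
      _ ≤ G * (C * Φ t) := by gcongr; exact hCT t ht htT
      _ = G * C * Φ t := by ring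

theorem exists_map_mul_le {c : ℝ} (hc : 0 ≤ c) (T : ℝ) :
    ∃ G, 0 ≤ G ∧ ∀ t, 0 ≤ t → t ≤ T → Φ (c * t) ≤ G * Φ t := by
  obtain ⟨N, hN⟩ := pow_unbounded_of_one_lt c (by norm_num : (1 : ℝ) < 2)
  obtain ⟨G, hG, hGT⟩ := exists_map_two_pow_mul_le hΦ hΔ N T
  exact ⟨G, hG, fun t ht htT =>
    (hΦ.mono (mul_nonneg hc ht) (by gcongr)).trans (hGT t ht htT)⟩

end Delta2

section Weight

variable {Φ : ℝ → ℝ} {w : ℤ → ℝ} {k k' : ℝ}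

theorem mu_nonneg (hΦ : IsOrlicz Φ) (hw : ∀ m, 0 ≤ w m) (m : ℤ) : 0 ≤ mu k Φ w m :=
  mul_nonneg (hw m) (Real.rpow_nonneg (by linarith [hΦ.nonneg (abs_nonneg (m : ℝ))]) k)

theorem le_mu (hΦ : IsOrlicz Φ) {w₀ : ℝ} (hw₀ : 0 ≤ w₀) (hw : ∀ m, w₀ ≤ w m) (hk : 0 ≤ k)
    (m : ℤ) : w₀ ≤ mu k Φ w m :=
  (hw m).trans <| le_mul_of_one_le_right (hw₀.trans (hw m)) <|
    Real.one_le_rpow (by linarith [hΦ.nonneg (abs_nonneg (m : ℝ))]) hk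

theorem mu_le_mu (hΦ : IsOrlicz Φ) (hw : ∀ m, 0 ≤ w m) (hkk : k ≤ k') (m : ℤ) :
    mu k Φ w m ≤ mu k' Φ w m :=
  mul_le_mul_of_nonneg_left
    (Real.rpow_le_rpow_of_exponent_le (by linarith [hΦ.nonneg (abs_nonneg (m : ℝ))]) hkk) (hw m)

theorem mu_le_rpow_mul_mu (hΦ : IsOrlicz Φ) (hw : ∀ m, 0 ≤ w m) (hkk : k ≤ k') {M : ℝ}
    (hM : 0 ≤ M) {m : ℤ} (hMm : M ≤ |(m : ℝ)|) :
    mu k Φ w m ≤ (1 + Φ M) ^ (k - k') * mu k' Φ w m := by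
  have hb : 0 < 1 + Φ M := by linarith [hΦ.nonneg hM]
  have hbm : 1 + Φ M ≤ 1 + Φ |(m : ℝ)| := by linarith [hΦ.mono hM hMm]
  calc mu k Φ w m = w m * ((1 + Φ |(m : ℝ)|) ^ (k - k') * (1 + Φ |(m : ℝ)|) ^ k') := by
        rw [mu, ← Real.rpow_add (hb.trans_le hbm), sub_add_cancel]
    _ ≤ w m * ((1 + Φ M) ^ (k - k') * (1 + Φ |(m : ℝ)|) ^ k') :=
        mul_le_mul_of_nonneg_left (mul_le_mul_of_nonneg_right
          (Real.rpow_le_rpow_of_nonpos hb hbm (by linarith))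
          (Real.rpow_nonneg (hb.le.trans hbm) k')) (hw m)
    _ = (1 + Φ M) ^ (k - k') * mu k' Φ w m := by rw [mu]; ring

theorem tendsto_one_add_rpow_sub (hΦ : IsOrlicz Φ) (hkk : k < k') :
    Tendsto (fun M : ℕ => (1 + Φ M) ^ (k - k')) atTop (𝓝 0) := by
  have h := (tendsto_rpow_neg_atTop (sub_pos.2 hkk)).comp <|
    tendsto_atTop_add_const_left _ 1 (hΦ.tendsto_atTop.comp tendsto_natCast_atTop_atTop)
  simpa only [Function.comp_def, neg_sub] using h

end Weight

/-- Bounding every finite partial sum encodes `Summable ∧ tsum ≤ A` for these nonnegative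
terms without the junk value of `tsum`. -/
def ModularLE (k : ℝ) (Φ : ℝ → ℝ) (w : ℤ → ℝ) (p : ℤ → ℂ) (ρ A : ℝ) : Prop :=
  ∀ F : Finset ℤ, ∑ m ∈ F, mu k Φ w m * Φ (‖p m‖ / ρ) ≤ A

theorem luxNorm_nonneg (k : ℝ) (Φ : ℝ → ℝ) (w : ℤ → ℝ) (p : ℤ → ℂ) : 0 ≤ luxNorm k Φ w p :=
  Real.sInf_nonneg fun _ hρ => hρ.1.le

section Modular

variable {Φ : ℝ → ℝ} {w : ℤ → ℝ} {k k' ρ ρ' A B : ℝ} {p u v : ℤ → ℂ}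

theorem tendsto_sum_modular (hΦ : IsOrlicz Φ) (hρ : 0 ≤ ρ) {ι : Type*} {l : Filter ι}
    {q : ι → ℤ → ℂ} (hq : ∀ m, Tendsto (fun i => q i m) l (𝓝 (p m))) (S : Finset ℤ) :
    Tendsto (fun i => ∑ m ∈ S, mu k Φ w m * Φ (‖q i m‖ / ρ)) l
      (𝓝 (∑ m ∈ S, mu k Φ w m * Φ (‖p m‖ / ρ))) :=
  tendsto_finsetSum S fun m _ => (hΦ.tendsto_comp (by positivity)
    ((hq m).norm.div_const ρ) fun _ => by positivity).const_mul _

theorem ModularLE.of_tendsto (hΦ : IsOrlicz Φ) (hρ : 0 ≤ ρ) {ι : Type*} {l : Filter ι}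
    [l.NeBot] {q : ι → ℤ → ℂ} (hq : ∀ m, Tendsto (fun i => q i m) l (𝓝 (p m)))
    (h : ∀ i, ModularLE k Φ w (q i) ρ A) : ModularLE k Φ w p ρ A := fun F =>
  le_of_tendsto (tendsto_sum_modular hΦ hρ hq F) (Eventually.of_forall fun i => h i F)

theorem exists_norm_le_of_modularLE (hΦ : IsOrlicz Φ) {w₀ : ℝ} (hw₀ : 0 < w₀)
    (hw : ∀ m, w₀ ≤ w m) (hk : 0 ≤ k) (hρ : 0 < ρ) :
    ∃ R, ∀ p, ModularLE k Φ w p ρ 1 → ∀ m, ‖p m‖ ≤ R := by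
  obtain ⟨b, hb⟩ := eventually_atTop.1 (hΦ.tendsto_atTop.eventually_gt_atTop w₀⁻¹)
  refine ⟨ρ * b, fun p hp m => ?_⟩
  have hm : mu k Φ w m * Φ (‖p m‖ / ρ) ≤ 1 := by simpa using hp {m}
  by_contra! hlt
  have hΦb : w₀⁻¹ < Φ (‖p m‖ / ρ) := hb _ ((le_div_iff₀ hρ).2 (by linarith))
  have hmu := le_mu hΦ hw₀.le hw hk m
  have : 1 < mu k Φ w m * Φ (‖p m‖ / ρ) :=
    calc (1 : ℝ) = w₀ * w₀⁻¹ := (mul_inv_cancel₀ hw₀.ne').symm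
      _ < _ := mul_lt_mul' hmu hΦb (inv_nonneg.2 hw₀.le) (hw₀.trans_le hmu)
  linarith

variable (hΦ : IsOrlicz Φ) (hw : ∀ m, 0 ≤ w m)
include hΦ hw

theorem modular_term_nonneg (hρ : 0 ≤ ρ) (p : ℤ → ℂ) (m : ℤ) :
    0 ≤ mu k Φ w m * Φ (‖p m‖ / ρ) :=
  mul_nonneg (mu_nonneg hΦ hw m) (hΦ.nonneg (by positivity))

theorem ModularLE.summable (hρ : 0 ≤ ρ) (h : ModularLE k Φ w p ρ A) :
    Summable fun m => mu k Φ w m * Φ (‖p m‖ / ρ) :=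
  summable_of_sum_le (fun m => modular_term_nonneg hΦ hw hρ p m) h

theorem modularLE_tsum (hρ : 0 ≤ ρ) (hs : Summable fun m => mu k Φ w m * Φ (‖p m‖ / ρ)) :
    ModularLE k Φ w p ρ (∑' m, mu k Φ w m * Φ (‖p m‖ / ρ)) := fun F =>
  hs.sum_le_tsum F fun m _ => modular_term_nonneg hΦ hw hρ p m

theorem mem_normSet_iff (hρ : 0 < ρ) : ρ ∈ normSet k Φ w p ↔ ModularLE k Φ w p ρ 1 :=
  ⟨fun ⟨_, hs, h⟩ F => (modularLE_tsum hΦ hw hρ.le hs F).trans h,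
    fun h => ⟨hρ, h.summable hΦ hw hρ.le, (h.summable hΦ hw hρ.le).tsum_le_of_sum_le h⟩⟩

theorem luxNorm_le_of_modularLE (hρ : 0 < ρ) (h : ModularLE k Φ w p ρ 1) :
    luxNorm k Φ w p ≤ ρ :=
  csInf_le ⟨0, fun _ hρ' => hρ'.1.le⟩ ((mem_normSet_iff hΦ hw hρ).2 h)

theorem ModularLE.mono_scale (hρ : 0 < ρ) (hρρ' : ρ ≤ ρ') (h : ModularLE k Φ w p ρ A) :
    ModularLE k Φ w p ρ' A := fun F =>
  (Finset.sum_le_sum fun m _ => mul_le_mul_of_nonneg_left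
    (hΦ.mono (div_nonneg (norm_nonneg _) (hρ.le.trans hρρ'))
      (div_le_div_of_nonneg_left (norm_nonneg _) hρ hρρ'))
    (mu_nonneg hΦ hw m)).trans (h F)

theorem ModularLE.mul_scale {c : ℝ} (hc : 1 ≤ c) (hρ : 0 ≤ ρ) (h : ModularLE k Φ w p ρ A) :
    ModularLE k Φ w p (c * ρ) (A / c) := fun F =>
  calc ∑ m ∈ F, mu k Φ w m * Φ (‖p m‖ / (c * ρ))
      ≤ ∑ m ∈ F, c⁻¹ * (mu k Φ w m * Φ (‖p m‖ / ρ)) := Finset.sum_le_sum fun m _ => by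
        rw [mul_comm c ρ, ← div_div, div_eq_inv_mul _ c, mul_left_comm]
        exact mul_le_mul_of_nonneg_left (hΦ.map_mul_le (by positivity) (inv_nonneg.2 (by linarith))
          (inv_le_one_of_one_le₀ hc)) (mu_nonneg hΦ hw m)
    _ ≤ A / c := by
        rw [← Finset.mul_sum, inv_mul_eq_div]
        exact div_le_div_of_nonneg_right (h F) (by linarith)

theorem normSet_nonempty (hp : MemS k Φ w p) : (normSet k Φ w p).Nonempty := by
  set S := ∑' m, mu k Φ w m * Φ (‖p m‖ / 1)
  have hS := (modularLE_tsum hΦ hw zero_le_one (hp 1 one_pos)).mul_scale hΦ hw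
    (le_max_left 1 S) zero_le_one
  refine ⟨max 1 S * 1, (mem_normSet_iff hΦ hw (by positivity)).2 fun F => (hS F).trans ?_⟩
  exact (div_le_one (by positivity)).2 (le_max_right _ _)

theorem modularLE_of_luxNorm_lt (hp : MemS k Φ w p) (hρ : luxNorm k Φ w p < ρ) :
    ModularLE k Φ w p ρ 1 := by
  obtain ⟨ρ', hρ', hρ'ρ⟩ := exists_lt_of_csInf_lt (normSet_nonempty hΦ hw hp) hρ
  exact ((mem_normSet_iff hΦ hw hρ'.1).1 hρ').mono_scale hΦ hw hρ'.1 hρ'ρ.le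

theorem ModularLE.mono_exponent (hkk : k ≤ k') (hρ : 0 ≤ ρ) (h : ModularLE k' Φ w p ρ A) :
    ModularLE k Φ w p ρ A := fun F =>
  (Finset.sum_le_sum fun m _ => mul_le_mul_of_nonneg_right (mu_le_mu hΦ hw hkk m)
    (hΦ.nonneg (by positivity))).trans (h F)

theorem ModularLE.sub (hρ : 0 ≤ ρ) (hu : ModularLE k Φ w u ρ A) (hv : ModularLE k Φ w v ρ B) :
    ModularLE k Φ w (u - v) (2 * ρ) ((A + B) / 2) := fun F =>
  calc ∑ m ∈ F, mu k Φ w m * Φ (‖(u - v) m‖ / (2 * ρ))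
      ≤ ∑ m ∈ F, (mu k Φ w m * Φ (‖u m‖ / ρ) + mu k Φ w m * Φ (‖v m‖ / ρ)) / 2 :=
        Finset.sum_le_sum fun m _ => by
          have hle : ‖(u - v) m‖ / (2 * ρ) ≤ (‖u m‖ / ρ + ‖v m‖ / ρ) / 2 := by
            rw [← add_div, div_div, mul_comm ρ]
            exact div_le_div_of_nonneg_right (norm_sub_le _ _) (by positivity)
          rw [← mul_add, mul_div_assoc]
          exact mul_le_mul_of_nonneg_left ((hΦ.mono (by positivity) hle).trans
            (hΦ.map_add_div_two_le (by positivity) (by positivity))) (mu_nonneg hΦ hw m)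
    _ ≤ (A + B) / 2 := by
        rw [← Finset.sum_div, Finset.sum_add_distrib]
        exact div_le_div_of_nonneg_right (add_le_add (hu F) (hv F)) zero_le_two

theorem modularLE_of_head_tail (hkk : k ≤ k') (hρ : 0 ≤ ρ) {S : Finset ℤ} {M a : ℝ}
    (hM : 0 ≤ M) (hS : ∀ m ∉ S, M ≤ |(m : ℝ)|)
    (hhead : ∑ m ∈ S, mu k Φ w m * Φ (‖p m‖ / ρ) ≤ a) (htail : ModularLE k' Φ w p ρ B) :
    ModularLE k Φ w p ρ (a + (1 + Φ M) ^ (k - k') * B) := by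
  intro F
  rw [← Finset.sum_filter_add_sum_filter_not F (· ∈ S)]
  refine add_le_add ((Finset.sum_le_sum_of_subset_of_nonneg (fun m hm => (Finset.mem_filter.1 hm).2)
    fun m _ _ => modular_term_nonneg hΦ hw hρ p m).trans hhead) ?_
  calc ∑ m ∈ F with m ∉ S, mu k Φ w m * Φ (‖p m‖ / ρ)
      ≤ ∑ m ∈ F with m ∉ S, (1 + Φ M) ^ (k - k') * (mu k' Φ w m * Φ (‖p m‖ / ρ)) :=
        Finset.sum_le_sum fun m hm => by
          rw [← mul_assoc]
          exact mul_le_mul_of_nonneg_right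
            (mu_le_rpow_mul_mu hΦ hw hkk hM (hS m (Finset.mem_filter.1 hm).2))
            (hΦ.nonneg (by positivity))
    _ ≤ (1 + Φ M) ^ (k - k') * B := by
        rw [← Finset.mul_sum]
        exact mul_le_mul_of_nonneg_left (htail _)
          (Real.rpow_nonneg (by linarith [hΦ.nonneg hM]) _)

end Modular

section Scaling

variable {Φ : ℝ → ℝ} {w : ℤ → ℝ} {k k' ρ ρ' R A : ℝ} {p : ℤ → ℂ}
variable (hΦ : IsOrlicz Φ) (hΔ : Delta2 Φ) (hw : ∀ m, 0 ≤ w m)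
include hΦ hΔ hw

theorem exists_modularLE_scale (hρ : 0 < ρ) (hρ' : 0 < ρ') (R : ℝ) :
    ∃ G, 0 ≤ G ∧ ∀ p A, (∀ m, ‖p m‖ ≤ R) → ModularLE k Φ w p ρ A →
      ModularLE k Φ w p ρ' (G * A) := by
  obtain ⟨G, hG, hGR⟩ := hΔ.exists_map_mul_le hΦ (c := ρ / ρ') (by positivity) (R / ρ)
  refine ⟨G, hG, fun p A hpR hp F => ?_⟩
  calc ∑ m ∈ F, mu k Φ w m * Φ (‖p m‖ / ρ')
      ≤ ∑ m ∈ F, G * (mu k Φ w m * Φ (‖p m‖ / ρ)) := Finset.sum_le_sum fun m _ => by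
        rw [show ‖p m‖ / ρ' = ρ / ρ' * (‖p m‖ / ρ) by field_simp, mul_left_comm]
        exact mul_le_mul_of_nonneg_left
          (hGR _ (by positivity) (div_le_div_of_nonneg_right (hpR m) hρ.le)) (mu_nonneg hΦ hw m)
    _ ≤ G * A := by
        rw [← Finset.mul_sum]
        exact mul_le_mul_of_nonneg_left (hp F) hG

theorem memS_of_modularLE (hpR : ∀ m, ‖p m‖ ≤ R) (hρ : 0 < ρ) (hp : ModularLE k Φ w p ρ A) :
    MemS k Φ w p := fun ρ' hρ' => by
  obtain ⟨G, -, hG⟩ := exists_modularLE_scale hΦ hΔ hw hρ hρ' R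
  exact (hG p A hpR hp).summable hΦ hw hρ'.le

theorem tendsto_luxNorm_zero (hkk : k < k') (hρ : 0 < ρ) {ι : Type*} {l : Filter ι}
    {v : ι → ℤ → ℂ} (hv : ∀ m, Tendsto (fun i => v i m) l (𝓝 0)) (hvR : ∀ i m, ‖v i m‖ ≤ R)
    (hvA : ∀ i, ModularLE k' Φ w (v i) ρ A) :
    Tendsto (fun i => luxNorm k Φ w (v i)) l (𝓝 0) := by
  refine tendsto_order.2 ⟨fun a ha => Eventually.of_forall fun i =>
    ha.trans_le (luxNorm_nonneg _ _ _ _), fun ε hε => ?_⟩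
  have hε₂ : 0 < ε / 2 := half_pos hε
  obtain ⟨G, -, hG⟩ := exists_modularLE_scale (k := k') hΦ hΔ hw hρ hε₂ R
  obtain ⟨M, hM⟩ := (((tendsto_one_add_rpow_sub hΦ hkk).mul_const (G * A)).eventually_lt_const
    (by rw [zero_mul]; norm_num : (0 : ℝ) * (G * A) < 1 / 2)).exists
  have hS : ∀ m ∉ Finset.Icc (-(M : ℤ)) M, (M : ℝ) ≤ |(m : ℝ)| := fun m hm => by
    have : ¬|m| ≤ (M : ℤ) := by rwa [abs_le, ← Finset.mem_Icc]
    exact_mod_cast (not_le.1 this).le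
  have hhead := (tendsto_sum_modular (k := k) (w := w) hΦ hε₂.le hv
    (Finset.Icc (-(M : ℤ)) M)).eventually_lt_const (by simp [hΦ.map_zero] : _ < (1 / 2 : ℝ))
  filter_upwards [hhead] with i hi
  have hmod := modularLE_of_head_tail hΦ hw hkk.le hε₂.le (Nat.cast_nonneg M) hS hi.le
    (hG _ _ (hvR i) (hvA i))
  refine (luxNorm_le_of_modularLE hΦ hw hε₂ fun F => (hmod F).trans ?_).trans_lt (half_lt_self hε)
  linarith

end Scaling

theorem exists_subseq_tendsto_of_norm_le {ι E : Type*} [Countable ι] [NormedAddCommGroup E]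
    [ProperSpace E] {R : ℝ} {u : ℕ → ι → E} (hu : ∀ n i, ‖u n i‖ ≤ R) :
    ∃ p : ι → E, (∀ i, ‖p i‖ ≤ R) ∧ ∃ φ : ℕ → ℕ, StrictMono φ ∧
      ∀ i, Tendsto (fun n => u (φ n) i) atTop (𝓝 (p i)) := by
  obtain ⟨p, hp, φ, hφ, hup⟩ :=
    (isCompact_univ_pi fun _ => isCompact_closedBall (0 : E) R).tendsto_subseq (x := u)
      fun n => Set.mem_univ_pi.2 fun i => mem_closedBall_zero_iff.2 (hu n i)
  exact ⟨p, fun i => mem_closedBall_zero_iff.1 (Set.mem_univ_pi.1 hp i), φ, hφ,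
    tendsto_pi_nhds.1 hup⟩

theorem stmt18 (Φ : ℝ → ℝ) (hΦ : IsOrlicz Φ) (hΔ : Delta2 Φ)
    (w : ℤ → ℝ) (hinf : ∃ w₀ > (0 : ℝ), ∀ m, w₀ ≤ w m)
    (k k' : ℝ) (hk : 0 ≤ k) (hkk : k < k')
    (K : Set (ℤ → ℂ)) (hKs : K ⊆ {p | MemS k' Φ w p})
    (hKb : ∃ κ > (0 : ℝ), ∀ p ∈ K, luxNorm k' Φ w p ≤ κ)
    (u : ℕ → ℤ → ℂ) (hu : ∀ n, u n ∈ K) :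
    ∃ φ : ℕ → ℕ, StrictMono φ ∧ ∃ p : ℤ → ℂ, MemS k Φ w p ∧
      Tendsto (fun n => luxNorm k Φ w (u (φ n) - p)) atTop (𝓝 0) := by
  obtain ⟨w₀, hw₀, hw₀w⟩ := hinf
  obtain ⟨κ, hκ, hKκ⟩ := hKb
  have hw : ∀ m, 0 ≤ w m := fun m => hw₀.le.trans (hw₀w m)
  have hk' : 0 ≤ k' := hk.trans hkk.le
  have hκ₁ : 0 < κ + 1 := by linarith
  have hmod : ∀ n, ModularLE k' Φ w (u n) (κ + 1) 1 := fun n =>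
    modularLE_of_luxNorm_lt hΦ hw (hKs (hu n)) ((hKκ _ (hu n)).trans_lt (lt_add_one κ))
  obtain ⟨R, hR⟩ := exists_norm_le_of_modularLE hΦ hw₀ hw₀w hk' hκ₁
  obtain ⟨p, hpR, φ, hφ, hup⟩ :=
    exists_subseq_tendsto_of_norm_le fun n => hR (u n) (hmod n)
  have hpmod : ModularLE k' Φ w p (κ + 1) 1 := .of_tendsto hΦ hκ₁.le hup fun n => hmod (φ n)
  refine ⟨φ, hφ, p, memS_of_modularLE hΦ hΔ hw hpR hκ₁ (hpmod.mono_exponent hΦ hw hkk.le hκ₁.le),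
    tendsto_luxNorm_zero hΦ hΔ hw hkk (by positivity : 0 < 2 * (κ + 1)) (R := 2 * R) ?_ ?_
      fun n => (hmod (φ n)).sub hΦ hw hκ₁.le hpmod⟩
  · exact fun m => by simpa using (hup m).sub_const (p m)
  · exact fun n m => (norm_sub_le _ _).trans (by linarith [hR _ (hmod (φ n)) m, hpR m])
end
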